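/- For 0 < α < 1/4 and 1/4 < β < 1/3, the octagon D₈(α) with vertices (-α,-3/2), (1-α,-3/2), (1+α,-1/2), (1-α,1/2) and their negatives, and the octagon D'₈(β') with vertices (2-β',-3), (-β',-3), (-2,-1), (-2,1) and their negatives, are related by invertible linear maps: for each α ∈ (0,1/4) there exists an invertible linear map σ : ℝ² → ℝ² and β' ∈ (0,1] such that σ(D₈(α)) = D'₈(β'). -/

import Mathlib

/-- The octagon `D₈(α)` with vertices `(-α,-3/2), (1-α,-3/2), (1+α,-1/2), (1-α,1/2)`
and their negatives. -/
noncomputable def D₈α (α : ℝ) : Set (ℝ × ℝ) :=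
  convexHull ℝ {(-α, -(3:ℝ)/2), (1 - α, -(3:ℝ)/2), (1 + α, -(1:ℝ)/2), (1 - α, (1:ℝ)/2),
    (α, (3:ℝ)/2), (α - 1, (3:ℝ)/2), (-1 - α, (1:ℝ)/2), (α - 1, -(1:ℝ)/2)}

/-- The octagon `D'₈(β)` with vertices `(2-β,-3), (-β,-3), (-2,-1), (-2,1)`
and their negatives. -/
noncomputable def D₈'β (β : ℝ) : Set (ℝ × ℝ) :=
  convexHull ℝ {(2 - β, -(3:ℝ)), (-β, -(3:ℝ)), (-(2:ℝ), -(1:ℝ)), (-(2:ℝ), (1:ℝ)),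
    (β - 2, (3:ℝ)), (β, (3:ℝ)), ((2:ℝ), (1:ℝ)), ((2:ℝ), -(1:ℝ))}

/-! The shear-scaling `(x, y) ↦ (2x + 4αy, 2y)` maps the vertices of `D₈(α)` onto those of
`D'₈(8α)`. This settles `α ≤ 1/8`; for `α > 1/8` the reflection `(x, y) ↦ (-x, y)` then carries
`D'₈(8α)` onto `D'₈(2 - 8α)`, with `2 - 8α ∈ (0, 1)`. -/

section Shear

variable {R : Type*} [CommRing R]

def shear (c : R) : (R × R) ≃ₗ[R] R × R where
  toFun p := (p.1 + c * p.2, p.2)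
  invFun p := (p.1 - c * p.2, p.2)
  map_add' p q := by ext <;> simp only [Prod.fst_add, Prod.snd_add]; ring
  map_smul' r p := by
    ext <;> simp only [Prod.smul_fst, Prod.smul_snd, smul_eq_mul, RingHom.id_apply]; ring
  left_inv p := by ext <;> simp
  right_inv p := by ext <;> simp

@[simp]
theorem shear_apply (c : R) (p : R × R) : shear c p = (p.1 + c * p.2, p.2) := rfl

end Shear

theorem LinearEquiv.image_convexHull {𝕜 E F : Type*} [Semiring 𝕜] [PartialOrder 𝕜]
    [AddCommMonoid E] [AddCommMonoid F] [Module 𝕜 E] [Module 𝕜 F] (e : E ≃ₗ[𝕜] F) (s : Set E) :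
    e '' convexHull 𝕜 s = convexHull 𝕜 (e '' s) :=
  e.toLinearMap.image_convexHull s

theorem shear_smul_image_D₈α (α : ℝ) :
    (shear (2 * α)).trans (LinearEquiv.smulOfNeZero ℝ _ 2 two_ne_zero) '' D₈α α =
      D₈'β (8 * α) := by
  rw [D₈α, D₈'β, LinearEquiv.image_convexHull]
  congr 1
  simp only [Set.image_insert_eq, Set.image_singleton, LinearEquiv.trans_apply, shear_apply,
    LinearEquiv.smulOfNeZero_apply, Prod.smul_mk, smul_eq_mul]
  ring_nf
  ext p
  simp only [Set.mem_insert_iff, Set.mem_singleton_iff]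
  tauto

theorem neg_fst_image_D₈'β (β : ℝ) :
    (LinearEquiv.neg ℝ).prodCongr (LinearEquiv.refl ℝ ℝ) '' D₈'β β = D₈'β (2 - β) := by
  rw [D₈'β, D₈'β, LinearEquiv.image_convexHull]
  congr 1
  simp only [Set.image_insert_eq, Set.image_singleton, LinearEquiv.prodCongr_apply,
    LinearEquiv.neg_apply, LinearEquiv.refl_apply]
  ring_nf
  ext p
  simp only [Set.mem_insert_iff, Set.mem_singleton_iff]
  tauto

/-- For each `α ∈ (0, 1/4)` there is an invertible linear map carrying the octagon
`D₈(α)` onto an octagon `D'₈(β')` with `β' ∈ (0, 1]`. -/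
theorem D₈α_linearly_equivalent_D₈'β (α : ℝ) (h0 : 0 < α) (h1 : α < 1/4) :
    ∃ (σ : (ℝ × ℝ) ≃ₗ[ℝ] (ℝ × ℝ)) (β' : ℝ), 0 < β' ∧ β' ≤ 1 ∧
      σ '' D₈α α = D₈'β β' := by
  set σ := (shear (2 * α)).trans (LinearEquiv.smulOfNeZero ℝ (ℝ × ℝ) 2 two_ne_zero)
  rcases le_or_gt α (1 / 8) with hα | hα
  · exact ⟨σ, 8 * α, by linarith, by linarith, shear_smul_image_D₈α α⟩
  · refine ⟨σ.trans ((LinearEquiv.neg ℝ).prodCongr (LinearEquiv.refl ℝ ℝ)), 2 - 8 * α,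
      by linarith, by linarith, ?_⟩
    rw [← neg_fst_image_D₈'β, ← shear_smul_image_D₈α, Set.image_image]
    rfl
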